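/- arXiv:1511.07868 — 6 statements merged into one kernel-verified Lean document; each statement's English description precedes it below -/
import Mathlib

section
/- The generalized Lau product A ×_T B is isomorphic as a topological algebra (via a continuous algebra isomorphism with continuous inverse) to the direct sum A ⊕_alg B. -/
/-- The generalized Lau product `A ×_T B` is isomorphic as a topological
algebra (via a continuous linear bijection with continuous inverse which is
multiplicative) to the direct sum `A ⊕_alg B` with coordinatewise multiplication. -/
theorem lau_prod_iso_direct_sum
    {A B : Type*}
    [NonUnitalNormedRing A] [NormedSpace ℂ A] [IsScalarTower ℂ A A]
    [SMulCommClass ℂ A A] [CompleteSpace A]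
    [NonUnitalNormedRing B] [NormedSpace ℂ B] [IsScalarTower ℂ B B]
    [SMulCommClass ℂ B B] [CompleteSpace B]
    (T : B →ₙₐ[ℂ] A) (hT : Continuous T)
    (mulT : A × B → A × B → A × B)
    (hmulT : ∀ x y : A × B,
      mulT x y = (x.1 * y.1 + T x.2 * y.1 + x.1 * T y.2, x.2 * y.2)) :
    ∃ e : (A × B) ≃L[ℂ] (A × B), ∀ x y : A × B, e (mulT x y) = e x * e y := by
  refine ⟨{ toFun := fun p => (p.1 + T p.2, p.2)
            invFun := fun p => (p.1 - T p.2, p.2)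
            map_add' := by
              intro x y
              simp only [Prod.ext_iff, map_add, Prod.fst_add, Prod.snd_add]
              refine ⟨by abel, trivial⟩
            map_smul' := by
              intro c x
              simp [Prod.ext_iff, map_smul, smul_add]
            left_inv := by
              intro x
              simp
            right_inv := by
              intro x
              simp
            continuous_toFun := by
              exact (continuous_fst.add (hT.comp continuous_snd)).prodMk
                continuous_snd
            continuous_invFun := by
              exact (continuous_fst.sub (hT.comp continuous_snd)).prodMk
                continuous_snd }, ?_⟩
  intro x y
  rw [hmulT]
  show ((x.1 * y.1 + T x.2 * y.1 + x.1 * T y.2) + T (x.2 * y.2), x.2 * y.2)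
      = ((x.1 + T x.2, x.2) : A × B) * (y.1 + T y.2, y.2)
  rw [Prod.mk_mul_mk, Prod.mk.injEq]
  refine ⟨?_, rfl⟩
  rw [map_mul, mul_add, add_mul, add_mul]
  abel
end

section
/- Given a character φ : B → ℂ, the map ψ(a,b) = (a + φ(b)·1, b) is an injective algebra homomorphism from the Lau product A ×_φ B into A¹ ⊕_alg B, and its image is a closed subalgebra of codimension one. -/
/-- For a character `φ : B → ℂ`, the map `ψ(a,b) = (a + φ(b)·1, b)` is
an injective algebra homomorphism from the Lau product `A ×_φ B` into
`A¹ ⊕_alg B`, and its image is a closed subalgebra of codimension one. -/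
theorem lau_embeds_in_unitization_prod
    {A B : Type*}
    [NonUnitalNormedRing A] [NormedSpace ℂ A] [IsScalarTower ℂ A A]
    [SMulCommClass ℂ A A] [RegularNormedAlgebra ℂ A] [CompleteSpace A]
    [NonUnitalNormedRing B] [NormedSpace ℂ B] [IsScalarTower ℂ B B]
    [SMulCommClass ℂ B B] [CompleteSpace B]
    (φ : B →ₙₐ[ℂ] ℂ) (hφc : Continuous φ) (hφ : φ ≠ 0)
    (mulPhi : A × B → A × B → A × B)
    (hmulPhi : ∀ x y : A × B,
      mulPhi x y = (x.1 * y.1 + φ x.2 • y.1 + φ y.2 • x.1, x.2 * y.2)) :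
    ∃ ψ : (A × B) →ₗ[ℂ] (Unitization ℂ A × B),
      (∀ x : A × B,
        ψ x = ((x.1 : Unitization ℂ A) + φ x.2 • (1 : Unitization ℂ A), x.2)) ∧
      Function.Injective ψ ∧
      (∀ x y : A × B, ψ (mulPhi x y) = ψ x * ψ y) ∧
      IsClosed (Set.range ψ) ∧
      (∀ x y : Unitization ℂ A × B, x ∈ Set.range ψ → y ∈ Set.range ψ →
        x * y ∈ Set.range ψ) ∧
      Module.finrank ℂ ((Unitization ℂ A × B) ⧸ LinearMap.range ψ) = 1 := by
  set ψ : (A × B) →ₗ[ℂ] (Unitization ℂ A × B) :=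
    { toFun := fun x => ((x.1 : Unitization ℂ A) + φ x.2 • (1 : Unitization ℂ A), x.2)
      map_add' := by
        intro x y
        simp [Prod.ext_iff, add_smul]
        abel
      map_smul' := by
        intro c x
        simp [Prod.ext_iff, smul_smul, smul_add] } with hψdef
  have hψ : ∀ x : A × B,
      ψ x = ((x.1 : Unitization ℂ A) + φ x.2 • (1 : Unitization ℂ A), x.2) := fun _ => rfl
  -- characterization of the range
  have hrange : ∀ z : Unitization ℂ A × B, z ∈ Set.range ψ ↔ z.1.fst = φ z.2 := by
    intro z
    constructor
    · rintro ⟨x, rfl⟩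
      simp [hψ, Unitization.fst_smul]
    · intro h
      refine ⟨(z.1.snd, z.2), ?_⟩
      rw [hψ]
      ext
      · show ((z.1.snd : Unitization ℂ A) + φ z.2 • 1).fst = z.1.fst
        simp [h]
      · show ((z.1.snd : Unitization ℂ A) + φ z.2 • 1).snd = z.1.snd
        simp
      · rfl
  refine ⟨ψ, hψ, ?_, ?_, ?_, ?_, ?_⟩
  · -- injective
    intro x y h
    rw [hψ, hψ, Prod.ext_iff] at h
    obtain ⟨h1, h2⟩ := h
    rw [h2] at h1
    have := add_right_cancel h1
    exact Prod.ext (Unitization.inr_injective this) h2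
  · -- multiplicative
    intro x y
    rw [hmulPhi, hψ, hψ, hψ]
    ext
    · show ((_ : Unitization ℂ A) + _).fst = _
      simp [Unitization.fst_smul, mul_comm]
    · show ((_ : Unitization ℂ A) + _).snd = _
      simp [Unitization.snd_smul, Unitization.snd_mul, smul_smul]
      abel
    · rfl
  · -- closed range
    have hc : Continuous (fun z : Unitization ℂ A × B => z.1.fst - φ z.2) := by
      have h1 : Continuous (fun u : Unitization ℂ A => u.fst) := by
        have := (Unitization.uniformEquivProd (𝕜 := ℂ) (A := A)).continuous
        exact (continuous_fst.comp this)
      exact (h1.comp continuous_fst).sub (hφc.comp continuous_snd)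
    have : Set.range ψ = {z : Unitization ℂ A × B | z.1.fst - φ z.2 = 0} := by
      ext z
      rw [hrange z]
      simp [sub_eq_zero]
    rw [this]
    exact isClosed_eq hc continuous_const
  · -- multiplicative closure
    intro x y hx hy
    rw [hrange] at hx hy ⊢
    simp [Unitization.fst_mul, hx, hy]
  · -- codimension one
    set f : (Unitization ℂ A × B) →ₗ[ℂ] ℂ :=
      { toFun := fun z => z.1.fst - φ z.2
        map_add' := by intro x y; simp; ring
        map_smul' := by intro c x; simp [Unitization.fst_smul]; ring }
    have hker : LinearMap.range ψ = LinearMap.ker f := by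
      ext z
      rw [LinearMap.mem_range]
      constructor
      · rintro ⟨x, rfl⟩
        have := (hrange (ψ x)).1 ⟨x, rfl⟩
        simp [f, LinearMap.mem_ker, this]
      · intro hz
        have : z.1.fst = φ z.2 := by
          have := (LinearMap.mem_ker.mp hz)
          simpa [f, sub_eq_zero] using this
        exact (hrange z).2 this
    have hsurj : Function.Surjective f := by
      intro c
      exact ⟨((c : ℂ) • (1 : Unitization ℂ A), 0), by simp [f, Unitization.fst_smul]⟩
    rw [hker]
    have e := f.quotKerEquivOfSurjective hsurj
    rw [e.finrank_eq]
    exact Module.finrank_self ℂ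
end

section
/- The image of the Lau product A ×_φ B under ψ(a,b) = (a + φ(b)·1, b) inside A¹ ⊕_alg B is in general not a two-sided ideal: there exist Banach algebras A, B and a character φ such that ψ(A ×_φ B) is not an ideal of A¹ ⊕_alg B. -/
/-!
Write `ψ` for the map `(a, b) ↦ (a + φ b • 1, b)`. A pair `(u, b)` lies in the range of `ψ`
exactly when the scalar part of `u` equals `φ b`. Multiplying `ψ (0, b)` by the unit `(1, 0)`
keeps the scalar part `φ b` but kills the `B`-component, so the product leaves the range as soon
as `φ b ≠ 0`. Hence any nonzero character, e.g. the identity of `ℂ`, gives a counterexample.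
-/

section LauEmbedding

variable {R A B : Type*} [CommRing R] [NonUnitalRing A] [Module R A] [NonUnitalRing B]
  [Module R B]

def lauEmbedding (φ : B →ₙₐ[R] R) (x : A × B) : Unitization R A × B :=
  ((x.1 : Unitization R A) + φ x.2 • (1 : Unitization R A), x.2)

theorem mem_range_lauEmbedding_iff (φ : B →ₙₐ[R] R) (p : Unitization R A × B) :
    p ∈ Set.range (lauEmbedding φ) ↔ p.1.fst = φ p.2 := by
  constructor
  · rintro ⟨x, rfl⟩
    simp [lauEmbedding]
  · intro h
    refine ⟨(p.1.snd, p.2), Prod.ext ?_ rfl⟩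
    ext <;> simp [lauEmbedding, h]

theorem lauEmbedding_mul_one_zero_notMem_range [IsScalarTower R A A] [SMulCommClass R A A]
    (φ : B →ₙₐ[R] R) {b : B} (hb : φ b ≠ 0) :
    lauEmbedding φ ((0 : A), b) * (1, 0) ∉ Set.range (lauEmbedding φ) := by
  rw [mem_range_lauEmbedding_iff]
  simpa [lauEmbedding] using hb

end LauEmbedding

/-- The image of the Lau product `A ×_φ B` under
`ψ(a,b) = (a + φ(b)·1, b)` inside `A¹ ⊕_alg B` is in general not a two-sided ideal:
there exist Banach algebras `A`, `B` and a character `φ` such that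
`ψ(A ×_φ B)` is not an ideal of `A¹ ⊕_alg B`. -/
theorem lau_image_not_ideal :
    ∃ (A : Type) (_ : NonUnitalNormedRing A) (_ : NormedSpace ℂ A)
      (_ : IsScalarTower ℂ A A) (_ : SMulCommClass ℂ A A) (_ : CompleteSpace A)
      (B : Type) (_ : NonUnitalNormedRing B) (_ : NormedSpace ℂ B)
      (_ : IsScalarTower ℂ B B) (_ : SMulCommClass ℂ B B) (_ : CompleteSpace B)
      (φ : B →ₙₐ[ℂ] ℂ), Continuous φ ∧ φ ≠ 0 ∧
      (letI ψ : A × B → Unitization ℂ A × B := fun x =>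
        ((x.1 : Unitization ℂ A) + φ x.2 • (1 : Unitization ℂ A), x.2)
       ¬ (∀ x ∈ Set.range ψ, ∀ y : Unitization ℂ A × B,
            y * x ∈ Set.range ψ ∧ x * y ∈ Set.range ψ)) := by
  refine ⟨ℂ, inferInstance, inferInstance, inferInstance, inferInstance, inferInstance,
    ℂ, inferInstance, inferInstance, inferInstance, inferInstance, inferInstance,
    NonUnitalAlgHom.id ℂ ℂ, continuous_id, fun h => one_ne_zero (DFunLike.congr_fun h 1), ?_⟩
  intro hIdeal
  have hφ : NonUnitalAlgHom.id ℂ ℂ 1 ≠ 0 := one_ne_zero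
  exact lauEmbedding_mul_one_zero_notMem_range _ hφ
    (hIdeal _ ⟨(0, 1), rfl⟩ (1, 0)).2
end

section
/- An element (a,b) of the generalized Lau product A ×_T B is invertible if and only if a + T(b) is invertible in A and b is invertible in B. -/
/-- An element `(a,b)` of the generalized Lau product `A ×_T B`
(which is unital with identity `(1 − T 1, 1)`) is invertible if and only if
`a + T b` is invertible in `A` and `b` is invertible in `B`. -/
theorem lau_prod_isUnit_iff
    {A B : Type*}
    [NormedRing A] [NormedAlgebra ℂ A] [CompleteSpace A]
    [NormedRing B] [NormedAlgebra ℂ B] [CompleteSpace B]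
    (T : B →ₐ[ℂ] A) (hT : Continuous T)
    (mulT : A × B → A × B → A × B)
    (hmulT : ∀ x y : A × B,
      mulT x y = (x.1 * y.1 + T x.2 * y.1 + x.1 * T y.2, x.2 * y.2))
    (a : A) (b : B) :
    (∃ x : A × B, mulT (a, b) x = ((1 : A) - T 1, (1 : B)) ∧
        mulT x (a, b) = ((1 : A) - T 1, (1 : B))) ↔
      IsUnit (a + T b) ∧ IsUnit b := by
  constructor
  · rintro ⟨⟨c, d⟩, h1, h2⟩
    rw [hmulT] at h1 h2
    simp only [Prod.mk.injEq] at h1 h2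
    obtain ⟨h1a, h1b⟩ := h1
    obtain ⟨h2a, h2b⟩ := h2
    constructor
    · refine ⟨⟨a + T b, c + T d, ?_, ?_⟩, rfl⟩
      · have : (a + T b) * (c + T d) =
            (a * c + T b * c + a * T d) + T (b * d) := by
          rw [map_mul]; noncomm_ring
        rw [this, h1a, h1b, map_one]; abel
      · have : (c + T d) * (a + T b) =
            (c * a + T d * a + c * T b) + T (d * b) := by
          rw [map_mul]; noncomm_ring
        rw [this, h2a, h2b, map_one]; abel
    · exact ⟨⟨b, d, h1b, h2b⟩, rfl⟩
  · rintro ⟨⟨u, hu⟩, ⟨v, hv⟩⟩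
    refine ⟨((u.inv : A) - T (v.inv : B), (v.inv : B)), ?_, ?_⟩ <;>
      rw [hmulT] <;> simp only [Prod.mk.injEq]
    · constructor
      · have h1 : (a + T b) * (u.inv : A) = 1 := by
          rw [← hu]; exact u.val_inv
        have h2 : (b : B) * (v.inv : B) = 1 := by
          rw [← hv]; exact v.val_inv
        calc a * ((u.inv : A) - T (v.inv : B)) + T b * ((u.inv : A) - T (v.inv : B))
              + a * T (v.inv : B)
            = (a + T b) * (u.inv : A) - T (b * (v.inv : B)) := by rw [map_mul]; noncomm_ring
          _ = 1 - T 1 := by rw [h1, h2]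
      · rw [← hv]; exact v.val_inv
    · constructor
      · have h1 : (u.inv : A) * (a + T b) = 1 := by
          rw [← hu]; exact u.inv_val
        have h2 : (v.inv : B) * (b : B) = 1 := by
          rw [← hv]; exact v.inv_val
        calc ((u.inv : A) - T (v.inv : B)) * a + T (v.inv : B) * a
              + ((u.inv : A) - T (v.inv : B)) * T b
            = (u.inv : A) * (a + T b) - T ((v.inv : B) * b) := by rw [map_mul]; noncomm_ring
          _ = 1 - T 1 := by rw [h1, h2]
      · rw [← hv]; exact v.inv_val
end

section
/- The spectrum of an element (a,b) in the generalized Lau product A ×_T B equals the union of the spectrum of a + T(b) in A and the spectrum of b in B. -/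
/-!
The shear `(x, y) ↦ (x + T y, y)` is a bijection from `A ×_T B` onto the ordinary product
`A × B` carrying the Lau multiplication to the coordinatewise one and the identity
`(1 - T 1, 1)` to `(1, 1)`. Hence `z • 1 - (a, b)` is invertible in `A ×_T B` exactly when
`(z - (a + T b), z - b)` is invertible in `A × B`, i.e. when both coordinates are.
-/

section LauProduct

variable {R A B F : Type*} [Ring A] [Ring B] [FunLike F B A]

def lauMul (T : F) (x y : A × B) : A × B :=
  (x.1 * y.1 + T x.2 * y.1 + x.1 * T y.2, x.2 * y.2)

def lauShear [AddMonoidHomClass F B A] (T : F) : A × B ≃ A × B where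
  toFun x := (x.1 + T x.2, x.2)
  invFun x := (x.1 - T x.2, x.2)
  left_inv x := by simp
  right_inv x := by simp

lemma lauShear_lauMul [RingHomClass F B A] (T : F) (x y : A × B) :
    lauShear T (lauMul T x y) = lauShear T x * lauShear T y := by
  ext
  · simp only [lauShear, lauMul, Equiv.coe_fn_mk, Prod.fst_mul, map_mul]
    noncomm_ring
  · rfl

lemma lauShear_identity [RingHomClass F B A] (T : F) :
    lauShear T ((1 : A) - T 1, (1 : B)) = 1 := by
  ext <;> simp [lauShear]

lemma exists_lauInverse_iff_isUnit_lauShear [RingHomClass F B A] (T : F) (u : A × B) :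
    (∃ x : A × B, lauMul T u x = ((1 : A) - T 1, (1 : B)) ∧
        lauMul T x u = ((1 : A) - T 1, (1 : B))) ↔ IsUnit (lauShear T u) := by
  have lauMul_eq_identity_iff : ∀ x y : A × B,
      lauMul T x y = ((1 : A) - T 1, (1 : B)) ↔ lauShear T x * lauShear T y = 1 := by
    intro x y
    rw [← lauShear_lauMul, ← lauShear_identity T, (lauShear T).apply_eq_iff_eq]
  simp only [lauMul_eq_identity_iff]
  constructor
  · rintro ⟨x, hux, hxu⟩
    exact isUnit_iff_exists.mpr ⟨lauShear T x, hux, hxu⟩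
  · intro hu
    obtain ⟨v, huv, hvu⟩ := isUnit_iff_exists.mp hu
    exact ⟨(lauShear T).symm v, by simpa using huv, by simpa using hvu⟩

lemma lauShear_smul_identity_sub [CommSemiring R] [Algebra R A] [Algebra R B]
    [AlgHomClass F R B A] (T : F) (z : R) (a : A) (b : B) :
    lauShear T (z • ((1 : A) - T 1, (1 : B)) - (a, b)) =
      (algebraMap R A z - (a + T b), algebraMap R B z - b) := by
  ext
  · simp only [lauShear, Equiv.coe_fn_mk, Prod.fst_sub, Prod.smul_fst, Prod.snd_sub,
      Prod.smul_snd, map_sub, map_smul, map_one, smul_sub, Algebra.algebraMap_eq_smul_one]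
    abel
  · simp [lauShear, Algebra.algebraMap_eq_smul_one]

end LauProduct

theorem lau_prod_spectrum_general
    {A B : Type*}
    [NormedRing A] [NormedAlgebra ℂ A]
    [NormedRing B] [NormedAlgebra ℂ B]
    (T : B →ₐ[ℂ] A)
    (mulT : A × B → A × B → A × B)
    (hmulT : ∀ x y : A × B,
      mulT x y = (x.1 * y.1 + T x.2 * y.1 + x.1 * T y.2, x.2 * y.2))
    (a : A) (b : B) :
    {z : ℂ | ¬ ∃ x : A × B,
        mulT (z • ((1 : A) - T 1, (1 : B)) - (a, b)) x = ((1 : A) - T 1, (1 : B)) ∧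
        mulT x (z • ((1 : A) - T 1, (1 : B)) - (a, b)) = ((1 : A) - T 1, (1 : B))}
      = spectrum ℂ (a + T b) ∪ spectrum ℂ b := by
  obtain rfl : mulT = lauMul T := funext₂ hmulT
  ext z
  simp only [Set.mem_ofPred_eq, exists_lauInverse_iff_isUnit_lauShear,
    lauShear_smul_identity_sub, Prod.isUnit_iff, not_and_or, Set.mem_union, spectrum.mem_iff]

/-- The spectrum of an element `(a,b)` of the generalized Lau product
`A ×_T B` (unital with identity `(1 − T 1, 1)`) equals the union of the spectrum of
`a + T b` in `A` and the spectrum of `b` in `B`. -/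
theorem lau_prod_spectrum
    {A B : Type*}
    [NormedRing A] [NormedAlgebra ℂ A] [CompleteSpace A]
    [NormedRing B] [NormedAlgebra ℂ B] [CompleteSpace B]
    (T : B →ₐ[ℂ] A) (hT : Continuous T)
    (mulT : A × B → A × B → A × B)
    (hmulT : ∀ x y : A × B,
      mulT x y = (x.1 * y.1 + T x.2 * y.1 + x.1 * T y.2, x.2 * y.2))
    (a : A) (b : B) :
    {z : ℂ | ¬ ∃ x : A × B,
        mulT (z • ((1 : A) - T 1, (1 : B)) - (a, b)) x = ((1 : A) - T 1, (1 : B)) ∧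
        mulT x (z • ((1 : A) - T 1, (1 : B)) - (a, b)) = ((1 : A) - T 1, (1 : B))}
      = spectrum ℂ (a + T b) ∪ spectrum ℂ b :=
  lau_prod_spectrum_general T mulT hmulT a b
end

section
/- Every character χ on the generalized Lau product A ×_T B is of the form χ(a,b) = χ_A(a + T(b)) for some character χ_A on A, or of the form χ(a,b) = χ_B(b) for some character χ_B on B. -/
/-- For commutative Banach algebras `A`, `B` and a continuous algebra
homomorphism `T : B → A`, every character `χ` on the generalized Lau product
`A ×_T B` is of the form `χ(a,b) = χ_A(a + T b)` for some character `χ_A` on `A`,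
or of the form `χ(a,b) = χ_B(b)` for some character `χ_B` on `B`. -/
theorem lau_prod_characters
    {A B : Type*}
    [NonUnitalNormedCommRing A] [NormedSpace ℂ A] [IsScalarTower ℂ A A]
    [SMulCommClass ℂ A A] [CompleteSpace A]
    [NonUnitalNormedCommRing B] [NormedSpace ℂ B] [IsScalarTower ℂ B B]
    [SMulCommClass ℂ B B] [CompleteSpace B]
    (T : B →ₙₐ[ℂ] A) (hT : Continuous T)
    (mulT : A × B → A × B → A × B)
    (hmulT : ∀ x y : A × B,
      mulT x y = (x.1 * y.1 + T x.2 * y.1 + x.1 * T y.2, x.2 * y.2))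
    (χ : A × B → ℂ) (hχlin : IsLinearMap ℂ χ) (hχcont : Continuous χ)
    (hχmul : ∀ x y : A × B, χ (mulT x y) = χ x * χ y) (hχne : χ ≠ 0) :
    (∃ χA : A → ℂ, IsLinearMap ℂ χA ∧ Continuous χA ∧
        (∀ a a' : A, χA (a * a') = χA a * χA a') ∧ χA ≠ 0 ∧
        ∀ (a : A) (b : B), χ (a, b) = χA (a + T b)) ∨
    (∃ χB : B → ℂ, IsLinearMap ℂ χB ∧ Continuous χB ∧
        (∀ b b' : B, χB (b * b') = χB b * χB b') ∧ χB ≠ 0 ∧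
        ∀ (a : A) (b : B), χ (a, b) = χB b) := by
  set χA : A → ℂ := fun a => χ (a, 0) with hχA
  set χB : B → ℂ := fun b => χ (0, b) with hχB
  have hsplit : ∀ (a : A) (b : B), χ (a, b) = χA a + χB b := by
    intro a b
    have : ((a, b) : A × B) = (a, 0) + (0, b) := by simp
    rw [this, hχlin.map_add]
  have hAmul : ∀ a a' : A, χA (a * a') = χA a * χA a' := by
    intro a a'
    have := hχmul (a, 0) (a', 0)
    rw [hmulT] at this
    simpa using this
  have hABmul : ∀ (a : A) (b : B), χA (a * T b) = χA a * χB b := by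
    intro a b
    have := hχmul (a, 0) (0, b)
    rw [hmulT] at this
    simpa using this
  have hBmul : ∀ b b' : B, χB (b * b') = χB b * χB b' := by
    intro b b'
    have := hχmul (0, b) (0, b')
    rw [hmulT] at this
    simpa using this
  by_cases hA : ∀ a : A, χA a = 0
  · right
    refine ⟨χB, ?_, ?_, hBmul, ?_, ?_⟩
    · exact ⟨fun b b' => by
        have : ((0, b + b') : A × B) = (0, b) + (0, b') := by simp
        simp only [hχB]; rw [this, hχlin.map_add],
      fun c b => by
        have : ((0, c • b) : A × B) = c • (0, b) := by simp
        simp only [hχB]; rw [this, hχlin.map_smul]⟩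
    · exact hχcont.comp (Continuous.prodMk_right 0)
    · intro h
      apply hχne
      funext x
      have := hsplit x.1 x.2
      simp only [hA x.1, congrFun h x.2, Pi.zero_apply] at this
      simpa using this
    · intro a b
      rw [hsplit a b, hA a, zero_add]
  · left
    push_neg at hA
    obtain ⟨a₀, ha₀⟩ := hA
    have hBA : ∀ b : B, χB b = χA (T b) := by
      intro b
      have h1 := hABmul a₀ b
      rw [hAmul a₀ (T b)] at h1
      exact (mul_left_cancel₀ ha₀ h1.symm)
    refine ⟨χA, ?_, ?_, hAmul, ?_, ?_⟩
    · exact ⟨fun a a' => by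
        have : ((a + a', (0 : B)) : A × B) = (a, 0) + (a', 0) := by simp
        simp only [hχA]; rw [this, hχlin.map_add],
      fun c a => by
        have : ((c • a, (0 : B)) : A × B) = c • (a, 0) := by simp
        simp only [hχA]; rw [this, hχlin.map_smul]⟩
    · exact hχcont.comp (continuous_id.prodMk continuous_const)
    · intro h
      exact ha₀ (congrFun h a₀)
    · intro a b
      have hadd : χA (a + T b) = χA a + χA (T b) := by
        have : ((a + T b, (0 : B)) : A × B) = (a, 0) + (T b, 0) := by simp
        simp only [hχA]; rw [this, hχlin.map_add]
      rw [hsplit a b, hBA b, hadd]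
end
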